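/- For every nonnegative integer n, Σ_{m=0}^{n} S1_C(n, m) · BC_m equals (−1)^j D_j / L_j^2 if n = r^j − 1 for some nonnegative integer j, and equals 0 otherwise; here S1_C denotes the Stirling-Carlitz numbers of the first kind and BC_m the Bernoulli-Carlitz numbers. -/

import Mathlib

/-!
Composing with `log_C`, the series `z / e_C(z)` becomes `log_C(z) / z`, because
`e_C(log_C z) = z`. Comparing coefficients of `z ^ n` gives
`∑ m, S1_C(n, m) BC_m = Π(n) · [z ^ (n + 1)] log_C(z)`, which vanishes unless `n + 1 = r ^ j`,
and then equals `(-1) ^ j / L_j · Π(r ^ j - 1)` with `Π(r ^ j - 1) = D_j / L_j`.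

Both `e_C` and `log_C` are `𝔽_r`-linear series, and in characteristic `p` the composite of
`∑ a_k z ^ r ^ k` and `∑ c_i z ^ r ^ i` is `∑_j (∑_k a_k c_(j-k) ^ r ^ k) z ^ r ^ j`. With the nodes
`x_i = T ^ r ^ i` one has `D_k = ∏_(i<k) (x_k - x_i)` and `L_m ^ r ^ k = ∏_(i<m) (x_(k+i+1) - x_k)`,
so the `k`-th term of the coefficient of `z ^ r ^ j` in `e_C(log_C z)` is
`1 / ∏_(i ≤ j, i ≠ k) (x_k - x_i)`. For `j ≥ 1` these terms sum to the coefficient of degree `j`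
of the Lagrange interpolant of the constant `1` on `x_0, …, x_j`, which is `0`.
-/

open scoped Classical
open PowerSeries Finset

noncomputable section

variable (F : Type) [Field F] [Fintype F]

/-- The rational function field `K = 𝔽_r(T)`. -/
abbrev K : Type := RatFunc F

/-- `r`, the cardinality of the finite field of constants. -/
def rr : ℕ := Fintype.card F

/-- The variable `T` of the rational function field. -/
def Tv : K F := RatFunc.X

/-- `[i] = T^{r^i} - T`. -/
def br (i : ℕ) : K F := Tv F ^ (rr F) ^ i - Tv F

/-- `D_0 = 1`, `D_i = [i] · D_{i-1}^r`. -/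
def D : ℕ → K F
  | 0 => 1
  | i + 1 => br F (i + 1) * D i ^ rr F

/-- `L_0 = 1`, `L_i = [i] · L_{i-1}`. -/
def L : ℕ → K F
  | 0 => 1
  | i + 1 => br F (i + 1) * L i

/-- The Carlitz factorial `Π(n) = ∏_j D_j^{c_j}`, where `c_j = n / r^j % r` are the
base-`r` digits of `n` (all digits with index `> n` vanish since `r ≥ 2`). -/
def Cf (n : ℕ) : K F := ∏ j ∈ Finset.range (n + 1), D F j ^ (n / (rr F) ^ j % rr F)

/-- The Carlitz logarithm `log_C(z) = Σ_{i ≥ 0} (-1)^i z^{r^i} / L_i`: the coefficient of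
`z^m` is `(-1)^i / L_i` if `m = r^i` and `0` otherwise (note `i ≤ r^i = m` since `r ≥ 2`). -/
def logC : PowerSeries (K F) :=
  PowerSeries.mk fun m =>
    ∑ i ∈ Finset.range (m + 1), if m = (rr F) ^ i then (-1 : K F) ^ i / L F i else 0

/-- The Carlitz exponential `e_C(z) = Σ_{i ≥ 0} z^{r^i} / D_i`. -/
def eC : PowerSeries (K F) :=
  PowerSeries.mk fun m =>
    ∑ i ∈ Finset.range (m + 1), if m = (rr F) ^ i then 1 / D F i else 0

/-- The power series `log_C(z)/z`. -/
def logCdivZ : PowerSeries (K F) :=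
  PowerSeries.mk fun n => PowerSeries.coeff (n + 1) (logC F)

/-- The power series `e_C(z)/z`. -/
def eCdivZ : PowerSeries (K F) :=
  PowerSeries.mk fun n => PowerSeries.coeff (n + 1) (eC F)

namespace PowerSeries

variable {R : Type*} [CommRing R]

theorem coeff_pow_eq_zero_of_lt {g : R⟦X⟧} (hg : constantCoeff g = 0) {n d : ℕ} (h : n < d) :
    coeff n (g ^ d) = 0 :=
  X_pow_dvd_iff.mp (pow_dvd_pow_of_dvd (X_dvd_iff.mpr hg) d) n h

theorem coeff_subst_eq_sum {f g : R⟦X⟧} (hg : constantCoeff g = 0) (n : ℕ) :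
    coeff n (f.subst g) = ∑ d ∈ range (n + 1), coeff d f * coeff n (g ^ d) := by
  rw [coeff_subst' (HasSubst.of_constantCoeff_zero' hg)]
  refine finsum_eq_sum_of_support_subset _ fun d hd => ?_
  rw [coe_range, Set.mem_Iio, Nat.lt_succ_iff]
  by_contra! hnd
  exact hd (by simp only [coeff_pow_eq_zero_of_lt hg hnd, smul_zero])

theorem coeff_pow_expChar_pow (p : ℕ) [ExpChar R p] (f : R⟦X⟧) (e n : ℕ) :
    coeff n (f ^ p ^ e) = if p ^ e ∣ n then coeff (n / p ^ e) f ^ p ^ e else 0 := by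
  rw [← MvPowerSeries.map_iterateFrobenius_expand p (expChar_ne_zero R p)]
  change coeff n (map _ (expand _ _ f)) = _
  rw [coeff_map, coeff_expand, apply_ite (iterateFrobenius R p e), iterateFrobenius_def, map_zero]

/-- The `q`-linear power series `∑ i, c i • X ^ q ^ i`. -/
def linearSeries (q : ℕ) (c : ℕ → R) : R⟦X⟧ :=
  mk fun m => ∑ i ∈ range (m + 1), if m = q ^ i then c i else 0

variable {q : ℕ}

theorem coeff_linearSeries_pow (hq : 1 < q) (c : ℕ → R) (i : ℕ) :
    coeff (q ^ i) (linearSeries q c) = c i := by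
  rw [linearSeries, coeff_mk, sum_eq_single_of_mem i
    (mem_range.mpr (Nat.lt_succ_of_lt (Nat.lt_pow_self hq))), if_pos rfl]
  exact fun k _ hk => if_neg fun h => hk (Nat.pow_right_injective hq h.symm)

theorem coeff_linearSeries_of_forall_ne (c : ℕ → R) {m : ℕ} (hm : ∀ i, m ≠ q ^ i) :
    coeff m (linearSeries q c) = 0 := by
  rw [linearSeries, coeff_mk]
  exact sum_eq_zero fun i _ => if_neg (hm i)

theorem constantCoeff_linearSeries (hq : q ≠ 0) (c : ℕ → R) :
    constantCoeff (linearSeries q c) = 0 := by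
  rw [← coeff_zero_eq_constantCoeff_apply]
  exact coeff_linearSeries_of_forall_ne c fun i => (pow_ne_zero i hq).symm

theorem linearSeries_ite_eq_X (hq : 1 < q) :
    linearSeries q (fun j => if j = 0 then (1 : R) else 0) = X := by
  ext n
  rw [coeff_X]
  by_cases hn : ∃ i, n = q ^ i
  · obtain ⟨i, rfl⟩ := hn
    simp only [coeff_linearSeries_pow hq, Nat.pow_eq_one, hq.ne', false_or]
  · push Not at hn
    rw [coeff_linearSeries_of_forall_ne _ hn, if_neg (by simpa using hn 0)]

theorem linearSeries_pow {p e : ℕ} [ExpChar R p] (hqe : q = p ^ e) (hq : 1 < q)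
    (c : ℕ → R) (k : ℕ) :
    linearSeries q c ^ q ^ k = linearSeries q fun i => if k ≤ i then c (i - k) ^ q ^ k else 0 := by
  ext n
  rw [hqe, ← pow_mul, coeff_pow_expChar_pow p, pow_mul, ← hqe]
  by_cases hn : ∃ i, n = q ^ i
  · obtain ⟨i, rfl⟩ := hn
    simp only [coeff_linearSeries_pow hq, Nat.pow_dvd_pow_iff_le_right hq]
    split_ifs with hki
    · rw [Nat.pow_div hki (by omega), coeff_linearSeries_pow hq]
    · rfl
  · push Not at hn
    rw [coeff_linearSeries_of_forall_ne _ hn]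
    split_ifs with hdvd
    · obtain ⟨m, rfl⟩ := hdvd
      rw [Nat.mul_div_cancel_left m (by positivity), coeff_linearSeries_of_forall_ne,
        zero_pow (by positivity)]
      rintro i rfl
      exact hn (k + i) (pow_add q k i).symm
    · rfl

theorem coeff_linearSeries_subst (hq : 1 < q) (a : ℕ → R) {g : R⟦X⟧}
    (hg : constantCoeff g = 0) (n : ℕ) :
    coeff n ((linearSeries q a).subst g) =
      ∑ k ∈ range (n + 1), a k * coeff n (g ^ q ^ k) := by
  simp only [coeff_subst_eq_sum hg, linearSeries, coeff_mk, sum_mul, ite_mul, zero_mul]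
  rw [sum_comm' (t' := range (n + 1)) (s' := fun k => Icc k n) fun m k => by
    simp only [mem_range, mem_Icc]; omega]
  refine sum_congr rfl fun k _ => ?_
  rw [sum_ite_eq', ite_eq_left_iff, mem_Icc]
  intro hk
  rw [coeff_pow_eq_zero_of_lt hg (by have := Nat.lt_pow_self hq (n := k); omega), mul_zero]

theorem linearSeries_subst_linearSeries {p e : ℕ} [ExpChar R p] (hqe : q = p ^ e) (hq : 1 < q)
    (a c : ℕ → R) :
    (linearSeries q a).subst (linearSeries q c) =
      linearSeries q fun j => ∑ k ∈ range (j + 1), a k * c (j - k) ^ q ^ k := by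
  ext n
  rw [coeff_linearSeries_subst hq a (constantCoeff_linearSeries (by omega) c)]
  simp_rw [linearSeries_pow hqe hq]
  by_cases hn : ∃ j, n = q ^ j
  · obtain ⟨j, rfl⟩ := hn
    simp_rw [coeff_linearSeries_pow hq, mul_ite, mul_zero]
    rw [← sum_filter]
    congr 1
    ext k
    simp only [mem_filter, mem_range]
    have := Nat.lt_pow_self hq (n := j)
    omega
  · push Not at hn
    simp_rw [coeff_linearSeries_of_forall_ne _ hn, mul_zero, sum_const_zero]

end PowerSeries

theorem Nat.mul_sub_one_eq_mul_sub_one_add_sub_one {x y : ℕ} (hx : 0 < x) (hy : 0 < y) :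
    x * y - 1 = x * (y - 1) + (x - 1) := by
  have := Nat.le_mul_of_pos_right x hy
  rw [Nat.mul_sub_one]
  omega

theorem Nat.pow_sub_one_div_pow_mod {b t j : ℕ} (hb : 0 < b) (htj : t < j) :
    (b ^ j - 1) / b ^ t % b = b - 1 := by
  obtain ⟨m, rfl⟩ : ∃ m, j = t + (m + 1) := ⟨j - t - 1, by omega⟩
  rw [pow_add, Nat.mul_sub_one_eq_mul_sub_one_add_sub_one (pow_pos hb t) (pow_pos hb _),
    Nat.mul_add_div (pow_pos hb t), Nat.div_eq_of_lt (Nat.sub_lt (pow_pos hb t) one_pos), add_zero,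
    pow_succ', Nat.mul_sub_one_eq_mul_sub_one_add_sub_one hb (pow_pos hb m), Nat.mul_add_mod,
    Nat.mod_eq_of_lt (by omega)]

theorem one_lt_rr : 1 < rr F := Fintype.one_lt_card

theorem rr_ne_zero : rr F ≠ 0 := Fintype.card_ne_zero

theorem exists_expChar_rr_eq_pow : ∃ p e : ℕ, ExpChar (K F) p ∧ rr F = p ^ e := by
  obtain ⟨e, hp, he⟩ := FiniteField.card F (ringChar F)
  exact ⟨ringChar F, e, ExpChar.prime hp, he⟩

theorem sub_pow_rr_pow (x y : K F) (k : ℕ) :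
    (x - y) ^ rr F ^ k = x ^ rr F ^ k - y ^ rr F ^ k := by
  obtain ⟨p, e, _, he⟩ := exists_expChar_rr_eq_pow F
  rw [he, ← pow_mul]
  exact sub_pow_expChar_pow x y _

theorem neg_one_pow_rr_pow (k : ℕ) : (-1 : K F) ^ rr F ^ k = -1 := by
  simpa [zero_pow (pow_ne_zero k (rr_ne_zero F))] using sub_pow_rr_pow F 0 1 k

def tpow (i : ℕ) : K F := Tv F ^ rr F ^ i

theorem tpow_injective : Function.Injective (tpow F) := by
  intro i j h
  have hX : (Polynomial.X : Polynomial F) ^ rr F ^ i = Polynomial.X ^ rr F ^ j :=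
    RatFunc.algebraMap_injective F (by simpa [tpow, Tv] using h)
  have hdeg := congrArg Polynomial.natDegree hX
  simp only [Polynomial.natDegree_X_pow] at hdeg
  exact Nat.pow_right_injective (one_lt_rr F) hdeg

theorem br_eq_tpow_sub (i : ℕ) : br F i = tpow F i - tpow F 0 := by
  simp [br, tpow]

theorem tpow_sub_tpow_pow (a b k : ℕ) :
    (tpow F a - tpow F b) ^ rr F ^ k = tpow F (a + k) - tpow F (b + k) := by
  simp only [sub_pow_rr_pow, tpow, ← pow_mul, ← pow_add]

theorem D_eq_prod (k : ℕ) : D F k = ∏ i ∈ range k, (tpow F k - tpow F i) := by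
  induction k with
  | zero => rfl
  | succ k ih =>
    rw [D, ih, prod_range_succ', br_eq_tpow_sub, ← prod_pow, mul_comm]
    congr 1
    refine prod_congr rfl fun i _ => ?_
    simpa using tpow_sub_tpow_pow F k i 1

theorem L_pow_eq_prod (m k : ℕ) :
    L F m ^ rr F ^ k = ∏ i ∈ range m, (tpow F (k + i + 1) - tpow F k) := by
  induction m with
  | zero => simp [L]
  | succ m ih =>
    rw [L, mul_pow, ih, prod_range_succ, mul_comm, br_eq_tpow_sub, tpow_sub_tpow_pow]
    congr 3 <;> omega

theorem D_ne_zero (k : ℕ) : D F k ≠ 0 := by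
  rw [D_eq_prod, prod_ne_zero_iff]
  exact fun i hi => sub_ne_zero.mpr ((tpow_injective F).ne (mem_range.mp hi).ne')

theorem Cf_ne_zero (n : ℕ) : Cf F n ≠ 0 :=
  prod_ne_zero_iff.mpr fun j _ => pow_ne_zero _ (D_ne_zero F j)

theorem L_ne_zero (m : ℕ) : L F m ≠ 0 := by
  have h := L_pow_eq_prod F m 0
  rw [pow_zero, pow_one] at h
  rw [h, prod_ne_zero_iff]
  exact fun i _ => sub_ne_zero.mpr ((tpow_injective F).ne (by omega))

theorem D_eq_L_mul_prod (j : ℕ) : D F j = L F j * ∏ t ∈ range j, D F t ^ (rr F - 1) := by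
  obtain ⟨s, hs⟩ : ∃ s, rr F = s + 1 := ⟨rr F - 1, by have := one_lt_rr F; omega⟩
  induction j with
  | zero => simp [D, L]
  | succ j ih =>
    rw [D, L, prod_range_succ, ih, hs, Nat.add_sub_cancel, pow_succ']
    ring

theorem Cf_rr_pow_sub_one (j : ℕ) : Cf F (rr F ^ j - 1) = D F j / L F j := by
  have hr := one_lt_rr F
  have hjr : j < rr F ^ j := Nat.lt_pow_self hr
  have hhigh : ∀ t ∈ range (rr F ^ j - 1 + 1), t ∉ range j →
      D F t ^ ((rr F ^ j - 1) / rr F ^ t % rr F) = 1 := by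
    intro t _ ht
    rw [mem_range, not_lt] at ht
    have := Nat.pow_le_pow_right (n := rr F) (by omega) ht
    rw [Nat.div_eq_of_lt (by omega), Nat.zero_mod, pow_zero]
  rw [eq_div_iff (L_ne_zero F j), D_eq_L_mul_prod, mul_comm, Cf,
    ← prod_subset (range_subset_range.mpr (by omega)) hhigh]
  congr 1
  exact prod_congr rfl fun t ht => by rw [Nat.pow_sub_one_div_pow_mod (by omega) (mem_range.mp ht)]

theorem one_div_D_mul_pow_eq_one_div_prod {j k : ℕ} (hkj : k ≤ j) :
    1 / D F k * ((-1) ^ (j - k) / L F (j - k)) ^ rr F ^ k =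
      1 / ∏ i ∈ (range (j + 1)).erase k, (tpow F k - tpow F i) := by
  have hsplit : (range (j + 1)).erase k = range k ∪ Ico (k + 1) (j + 1) := by
    ext i
    simp only [mem_erase, mem_range, mem_union, mem_Ico]
    omega
  have hupper : ∏ i ∈ Ico (k + 1) (j + 1), (tpow F k - tpow F i) =
      (-1) ^ (j - k) * L F (j - k) ^ rr F ^ k := by
    have hneg := prod_neg (s := range (j - k)) fun i => tpow F (k + i + 1) - tpow F k
    rw [card_range] at hneg
    rw [prod_Ico_eq_prod_range, L_pow_eq_prod, show j + 1 - (k + 1) = j - k by omega, ← hneg]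
    exact prod_congr rfl fun i _ => by rw [neg_sub, add_right_comm]
  have hdisj : Disjoint (range k) (Ico (k + 1) (j + 1)) :=
    disjoint_left.mpr fun i hi hi' => by simp only [mem_range, mem_Ico] at hi hi'; omega
  rw [hsplit, prod_union hdisj, ← D_eq_prod, hupper, div_pow, ← pow_mul, mul_comm (j - k),
    pow_mul, neg_one_pow_rr_pow]
  field_simp
  rw [← pow_mul, pow_mul', neg_one_sq, one_pow]

theorem sum_one_div_D_mul_pow (j : ℕ) :
    ∑ k ∈ range (j + 1), 1 / D F k * ((-1) ^ (j - k) / L F (j - k)) ^ rr F ^ k =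
      if j = 0 then 1 else 0 := by
  rcases Nat.eq_zero_or_pos j with rfl | hj
  · simp [D, L]
  rw [if_neg hj.ne', sum_congr rfl fun k hk => one_div_D_mul_pow_eq_one_div_prod F
    (Nat.lt_succ_iff.mp (mem_range.mp hk))]
  have := Lagrange.coeff_eq_sum (s := range (j + 1)) (tpow_injective F).injOn
    (P := 1) (by rw [Polynomial.degree_one, card_range]; exact_mod_cast Nat.succ_pos j)
  simpa [Polynomial.coeff_one, hj.ne'] using this.symm

theorem logC_eq_linearSeries : logC F = linearSeries (rr F) fun i => (-1) ^ i / L F i := rfl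

theorem eC_eq_linearSeries : eC F = linearSeries (rr F) fun i => 1 / D F i := rfl

theorem constantCoeff_logC : constantCoeff (logC F) = 0 :=
  constantCoeff_linearSeries (rr_ne_zero F) _

theorem eC_subst_logC : (eC F).subst (logC F) = X := by
  obtain ⟨p, e, _, he⟩ := exists_expChar_rr_eq_pow F
  rw [eC_eq_linearSeries, logC_eq_linearSeries,
    linearSeries_subst_linearSeries he (one_lt_rr F)]
  simp_rw [sum_one_div_D_mul_pow]
  exact linearSeries_ite_eq_X (one_lt_rr F)

theorem X_mul_eCdivZ : X * eCdivZ F = eC F := by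
  ext (_ | m)
  · rw [coeff_zero_X_mul, eq_comm, coeff_zero_eq_constantCoeff_apply, eC_eq_linearSeries,
      constantCoeff_linearSeries (rr_ne_zero F)]
  · rw [coeff_succ_X_mul, eCdivZ, coeff_mk]

theorem coeff_succ_logC_eq_sum {B : (K F)⟦X⟧} (hB : B * eCdivZ F = 1) (n : ℕ) :
    coeff (n + 1) (logC F) = ∑ m ∈ range (n + 1), coeff m B * coeff n (logC F ^ m) := by
  have hlog : HasSubst (logC F) := HasSubst.of_constantCoeff_zero' (constantCoeff_logC F)
  have hE : logC F * (eCdivZ F).subst (logC F) = X := by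
    rw [← eC_subst_logC F, ← X_mul_eCdivZ, subst_mul hlog, subst_X hlog]
  have hBE : B.subst (logC F) * (eCdivZ F).subst (logC F) = 1 := by
    rw [← subst_mul hlog, hB, ← coe_substAlgHom hlog, map_one]
  have hG : B.subst (logC F) * X = logC F := by
    linear_combination (-B.subst (logC F)) * hE + logC F * hBE
  rw [← coeff_subst_eq_sum (constantCoeff_logC F), ← coeff_succ_mul_X n, hG]

/-- Theorem: `Σ_{m=0}^n S1_C(n, m) · BC_m` equals `(-1)^j D_j / L_j^2` if `n = r^j - 1`
for some `j ≥ 0`, and equals `0` otherwise. -/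
theorem sum_stirlingCarlitzFirst_mul_bernoulliCarlitz
    (BC : ℕ → K F) (S1C : ℕ → ℕ → K F)
    (hBC : (PowerSeries.mk fun n => BC n / Cf F n) * eCdivZ F = 1)
    (hS1C : ∀ n k : ℕ,
      PowerSeries.coeff n (logC F ^ k) / Cf F k = S1C n k / Cf F n)
    (n : ℕ) :
    (∀ j : ℕ, n = (rr F) ^ j - 1 →
        ∑ m ∈ Finset.range (n + 1), S1C n m * BC m = (-1 : K F) ^ j * D F j / L F j ^ 2) ∧
      ((∀ j : ℕ, n ≠ (rr F) ^ j - 1) →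
        ∑ m ∈ Finset.range (n + 1), S1C n m * BC m = 0) := by
  have hsum : ∑ m ∈ range (n + 1), S1C n m * BC m = Cf F n * coeff (n + 1) (logC F) := by
    rw [coeff_succ_logC_eq_sum F hBC, mul_sum]
    refine sum_congr rfl fun m _ => ?_
    rw [coeff_mk, (div_eq_iff (Cf_ne_zero F n)).mp (hS1C n m).symm]
    field_simp [Cf_ne_zero F m]
  have hr := one_lt_rr F
  refine ⟨fun j hj => ?_, fun hj => ?_⟩
  · have hn : n + 1 = rr F ^ j := by have := Nat.one_le_pow j _ (by omega : 0 < rr F); omega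
    rw [hsum, hn, logC_eq_linearSeries, coeff_linearSeries_pow hr, hj, Cf_rr_pow_sub_one]
    ring
  · rw [hsum, logC_eq_linearSeries, coeff_linearSeries_of_forall_ne _ fun i h => hj i (by omega),
      mul_zero]
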